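/- Let σ be an involutive automorphism of ℍ, extended entrywise to matrices (write X̂ for the matrix obtained by applying σ to each entry of X). The quaternion matrix equation AX - X̂B = C has a solution if and only if there exists a nonsingular quaternion matrix S such that Ŝ⁻¹·[[A, C], [0, B]]·S = [[A, 0], [0, B]]. -/

import Mathlib

/-!
A solution `X` gives the similarity `S = [[1, -X], [0, 1]]`. Conversely, a ring automorphism of
`ℍ` fixes its centre `ℝ` pointwise, so it is `ℝ`-linear and a dimension count over `ℝ` applies
(Flanders–Wimmer). Put `M_C = [[A, C], [0, B]]`, `N = [[A, 0], [0, B]]` and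
`W_C = {Z | M_C Z = Ẑ N}`. Left multiplication by `S` maps `W_0` isomorphically onto `W_C`.
The projection of `Z` to its lower block row has the same kernel on `W_C` and on `W_0`, and its
image on `W_C` lies in its image on `W_0`; equal dimensions force the two images to coincide.
As `(0, 1)` is the lower row of `[[0, 0], [0, 1]] ∈ W_0`, some `Z ∈ W_C` has lower row `(0, 1)`,
and then `-Z₁₂` solves `A X - X̂ B = C`.
-/

open Matrix Module Quaternion

theorem Submodule.finrank_map_add_finrank_inf_ker {K V W : Type*} [Field K] [AddCommGroup V]
    [Module K V] [AddCommGroup W] [Module K W] [FiniteDimensional K V] (f : V →ₗ[K] W)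
    (U : Submodule K V) :
    finrank K (U.map f) + finrank K ↥(U ⊓ LinearMap.ker f) = finrank K U := by
  have hker : finrank K (LinearMap.ker (f.domRestrict U)) =
      finrank K ↥(U ⊓ LinearMap.ker f) := by
    rw [LinearMap.ker_domRestrict, ← Submodule.map_comap_subtype]
    exact (Submodule.equivMapOfInjective _ U.injective_subtype _).finrank_eq
  rw [← hker, ← LinearMap.range_domRestrict]
  exact LinearMap.finrank_range_add_finrank_ker _

theorem Submodule.map_eq_of_le_of_inf_ker_eq {K V W : Type*} [Field K] [AddCommGroup V]
    [Module K V] [AddCommGroup W] [Module K W] [FiniteDimensional K V] (f : V →ₗ[K] W)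
    {U₁ U₂ : Submodule K V} (hle : U₁.map f ≤ U₂.map f)
    (hker : U₁ ⊓ LinearMap.ker f = U₂ ⊓ LinearMap.ker f) (hrank : finrank K U₁ = finrank K U₂) :
    U₁.map f = U₂.map f := by
  refine Submodule.eq_of_le_of_finrank_eq hle ?_
  have h₁ := U₁.finrank_map_add_finrank_inf_ker f
  have h₂ := U₂.finrank_map_add_finrank_inf_ker f
  rw [hker] at h₁
  omega

namespace Matrix

def toLowerBlocksₗ (K R : Type*) [Semiring K] [AddCommMonoid R] [Module K R]
    {l m n o : Type*} : Matrix (m ⊕ n) (l ⊕ o) R →ₗ[K] Matrix n l R × Matrix n o R where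
  toFun Z := (Z.toBlocks₂₁, Z.toBlocks₂₂)
  map_add' _ _ := rfl
  map_smul' _ _ := rfl

@[simp]
theorem toLowerBlocksₗ_apply {K R : Type*} [Semiring K] [AddCommMonoid R] [Module K R]
    {l m n o : Type*} (Z : Matrix (m ⊕ n) (l ⊕ o) R) :
    toLowerBlocksₗ K R Z = (Z.toBlocks₂₁, Z.toBlocks₂₂) := rfl

section RingHom

variable {R : Type*} [Ring R] (σ : R →+* R) {m n : Type*} [Fintype m] [Fintype n]

theorem fromBlocks_mul_eq_map_mul_fromBlocks_iff {A : Matrix m m R} {B : Matrix n n R}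
    {C : Matrix m n R} {Z : Matrix (m ⊕ n) (m ⊕ n) R} :
    fromBlocks A C 0 B * Z = Z.map σ * fromBlocks A 0 0 B ↔
      A * Z.toBlocks₁₁ + C * Z.toBlocks₂₁ = Z.toBlocks₁₁.map σ * A ∧
      A * Z.toBlocks₁₂ + C * Z.toBlocks₂₂ = Z.toBlocks₁₂.map σ * B ∧
      B * Z.toBlocks₂₁ = Z.toBlocks₂₁.map σ * A ∧
      B * Z.toBlocks₂₂ = Z.toBlocks₂₂.map σ * B := by
  conv_lhs => rw [← fromBlocks_toBlocks Z]
  rw [fromBlocks_map, fromBlocks_multiply, fromBlocks_multiply, fromBlocks_inj]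
  simp

theorem exists_isUnit_of_mul_sub_map_mul_eq [DecidableEq m] [DecidableEq n]
    {A : Matrix m m R} {B : Matrix n n R} {C X : Matrix m n R}
    (hX : A * X - X.map σ * B = C) :
    ∃ S : Matrix (m ⊕ n) (m ⊕ n) R, IsUnit S ∧
      fromBlocks A C 0 B * S = S.map σ * fromBlocks A 0 0 B := by
  refine ⟨fromBlocks 1 (-X) 0 1, isUnit_iff_exists.mpr ⟨fromBlocks 1 X 0 1, ?_, ?_⟩, ?_⟩
  · simp [fromBlocks_multiply, fromBlocks_one]
  · simp [fromBlocks_multiply, fromBlocks_one]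
  · refine (fromBlocks_mul_eq_map_mul_fromBlocks_iff σ).mpr ⟨by simp, ?_, by simp, by simp⟩
    rw [toBlocks_fromBlocks₁₂, toBlocks_fromBlocks₂₂, Matrix.mul_one, ← hX,
      Matrix.map_neg _ (map_neg σ), Matrix.mul_neg, Matrix.neg_mul]
    abel

end RingHom

section Algebra

variable {K R : Type*} [CommRing K] [Ring R] [Algebra K R] (σ : R →ₐ[K] R)
variable {ι κ : Type*} [Fintype ι] [Fintype κ]

def twistedIntertwiners (M : Matrix ι ι R) (N : Matrix κ κ R) : Submodule K (Matrix ι κ R) where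
  carrier := {Z | M * Z = Z.map σ * N}
  add_mem' {Z W} hZ hW := by
    simp only [Set.mem_ofPred_eq, Matrix.mul_add, Matrix.map_add σ (map_add σ),
      Matrix.add_mul] at *
    rw [hZ, hW]
  zero_mem' := by simp
  smul_mem' c Z hZ := by
    have hmap : (c • Z).map σ = c • Z.map σ := by ext; simp
    simp only [Set.mem_ofPred_eq, Matrix.mul_smul, hmap, Matrix.smul_mul] at *
    rw [hZ]

variable {σ}

theorem mem_twistedIntertwiners {M : Matrix ι ι R} {N : Matrix κ κ R} {Z : Matrix ι κ R} :
    Z ∈ twistedIntertwiners σ M N ↔ M * Z = Z.map σ * N := Iff.rfl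

theorem mul_mem_twistedIntertwiners {M M' S : Matrix ι ι R} {N : Matrix κ κ R}
    (hS : M * S = S.map σ * M') {Z : Matrix ι κ R} (hZ : Z ∈ twistedIntertwiners σ M' N) :
    S * Z ∈ twistedIntertwiners σ M N := by
  rw [mem_twistedIntertwiners] at *
  rw [← Matrix.mul_assoc, hS, Matrix.mul_assoc, hZ, ← Matrix.mul_assoc, Matrix.map_mul]

theorem finrank_twistedIntertwiners_eq_of_isUnit [DecidableEq ι] {M M' S : Matrix ι ι R}
    (hS : IsUnit S) (h : M * S = S.map σ * M') (N : Matrix κ κ R) :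
    finrank K (twistedIntertwiners σ M N) = finrank K (twistedIntertwiners σ M' N) := by
  obtain ⟨T, hST, hTS⟩ := isUnit_iff_exists.mp hS
  have h' : M' * T = T.map σ * M := by
    calc M' * T = T.map σ * S.map σ * M' * T := by
          rw [← Matrix.map_mul, hTS, Matrix.map_one _ (map_zero σ) (map_one σ), Matrix.one_mul]
      _ = T.map σ * M * (S * T) := by simp only [Matrix.mul_assoc, ← h]
      _ = T.map σ * M := by rw [hST, Matrix.mul_one]
  let e : twistedIntertwiners σ M' N ≃ₗ[K] twistedIntertwiners σ M N :=
    { toFun := fun Z => ⟨S * Z.1, mul_mem_twistedIntertwiners h Z.2⟩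
      invFun := fun Z => ⟨T * Z.1, mul_mem_twistedIntertwiners h' Z.2⟩
      map_add' := fun Z W => Subtype.ext (Matrix.mul_add _ _ _)
      map_smul' := fun c Z => Subtype.ext (Matrix.mul_smul _ c _)
      left_inv := fun Z => Subtype.ext (by simp [← Matrix.mul_assoc, hTS])
      right_inv := fun Z => Subtype.ext (by simp [← Matrix.mul_assoc, hST]) }
  exact e.finrank_eq.symm

theorem mem_twistedIntertwiners_fromBlocks_iff {m n : Type*} [Fintype m] [Fintype n]
    {A : Matrix m m R} {B : Matrix n n R} {C : Matrix m n R} {Z : Matrix (m ⊕ n) (m ⊕ n) R} :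
    Z ∈ twistedIntertwiners σ (fromBlocks A C 0 B) (fromBlocks A 0 0 B) ↔
      A * Z.toBlocks₁₁ + C * Z.toBlocks₂₁ = Z.toBlocks₁₁.map σ * A ∧
      A * Z.toBlocks₁₂ + C * Z.toBlocks₂₂ = Z.toBlocks₁₂.map σ * B ∧
      B * Z.toBlocks₂₁ = Z.toBlocks₂₁.map σ * A ∧
      B * Z.toBlocks₂₂ = Z.toBlocks₂₂.map σ * B :=
  fromBlocks_mul_eq_map_mul_fromBlocks_iff (σ : R →+* R)

end Algebra

section Field

variable {K R : Type*} [Field K] [Ring R] [Algebra K R] [FiniteDimensional K R] {σ : R →ₐ[K] R}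
variable {m n : Type*} [Fintype m] [Fintype n] [DecidableEq m] [DecidableEq n]

theorem exists_mul_sub_map_mul_eq_of_isUnit {A : Matrix m m R} {B : Matrix n n R}
    {C : Matrix m n R} {S : Matrix (m ⊕ n) (m ⊕ n) R} (hS : IsUnit S)
    (h : fromBlocks A C 0 B * S = S.map σ * fromBlocks A 0 0 B) :
    ∃ X : Matrix m n R, A * X - X.map σ * B = C := by
  set N := fromBlocks A 0 0 B
  set π := toLowerBlocksₗ K R (m := m) (n := n) (l := m) (o := n)
  have hrank : finrank K (twistedIntertwiners σ (fromBlocks A C 0 B) N) =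
      finrank K (twistedIntertwiners σ N N) :=
    finrank_twistedIntertwiners_eq_of_isUnit hS h N
  have hker : twistedIntertwiners σ (fromBlocks A C 0 B) N ⊓ LinearMap.ker π =
      twistedIntertwiners σ N N ⊓ LinearMap.ker π := by
    ext Z
    simp only [Submodule.mem_inf, LinearMap.mem_ker, π, toLowerBlocksₗ_apply, Prod.mk_eq_zero,
      N, mem_twistedIntertwiners_fromBlocks_iff]
    constructor <;> rintro ⟨⟨h₁₁, h₁₂, -, -⟩, h₂₁, h₂₂⟩ <;> simp_all
  have hle : (twistedIntertwiners σ (fromBlocks A C 0 B) N).map π ≤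
      (twistedIntertwiners σ N N).map π := by
    rintro _ ⟨Z, hZ, rfl⟩
    obtain ⟨-, -, h₂₁, h₂₂⟩ := mem_twistedIntertwiners_fromBlocks_iff.mp hZ
    refine ⟨fromBlocks 0 0 Z.toBlocks₂₁ Z.toBlocks₂₂,
      mem_twistedIntertwiners_fromBlocks_iff.mpr ?_, by simp [π]⟩
    simp [h₂₁, h₂₂]
  have hmap := Submodule.map_eq_of_le_of_inf_ker_eq π hle hker hrank
  have hbottom : ((0, 1) : Matrix n m R × Matrix n n R) ∈ (twistedIntertwiners σ N N).map π :=
    ⟨fromBlocks 0 0 0 1, mem_twistedIntertwiners_fromBlocks_iff.mpr (by simp), by simp [π]⟩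
  rw [← hmap] at hbottom
  obtain ⟨Z, hZ, hπZ⟩ := hbottom
  simp only [π, toLowerBlocksₗ_apply, Prod.mk.injEq] at hπZ
  obtain ⟨-, h₁₂, -, -⟩ := mem_twistedIntertwiners_fromBlocks_iff.mp hZ
  refine ⟨-Z.toBlocks₁₂, ?_⟩
  rw [hπZ.2, Matrix.mul_one] at h₁₂
  simp [Matrix.map_neg, ← h₁₂]

variable (σ) in
theorem exists_mul_sub_map_mul_eq_iff (A : Matrix m m R) (B : Matrix n n R) (C : Matrix m n R) :
    (∃ X : Matrix m n R, A * X - X.map σ * B = C) ↔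
      ∃ S : Matrix (m ⊕ n) (m ⊕ n) R, IsUnit S ∧
        fromBlocks A C 0 B * S = S.map σ * fromBlocks A 0 0 B :=
  ⟨fun ⟨_, hX⟩ => exists_isUnit_of_mul_sub_map_mul_eq (σ : R →+* R) hX,
    fun ⟨_, hS, h⟩ => exists_mul_sub_map_mul_eq_of_isUnit hS h⟩

end Field

end Matrix

theorem Quaternion.eq_coe_re_of_forall_mul_comm {q : ℍ[ℝ]} (h : ∀ x : ℍ[ℝ], q * x = x * q) :
    q = (q.re : ℍ[ℝ]) := by
  have h₁ := congrArg QuaternionAlgebra.imJ (h ⟨0, 1, 0, 0⟩)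
  have h₂ := congrArg QuaternionAlgebra.imK (h ⟨0, 1, 0, 0⟩)
  have h₃ := congrArg QuaternionAlgebra.imK (h ⟨0, 0, 1, 0⟩)
  erw [Quaternion.imJ_mul, Quaternion.imJ_mul] at h₁
  erw [Quaternion.imK_mul, Quaternion.imK_mul] at h₂ h₃
  simp only [mul_zero, mul_one, zero_mul, one_mul, add_zero, zero_add, sub_self, sub_zero,
    zero_sub] at h₁ h₂ h₃
  ext <;> simp <;> linarith

theorem Quaternion.ringEquiv_apply_coe (σ : ℍ[ℝ] ≃+* ℍ[ℝ]) (r : ℝ) : σ r = r := by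
  have hcentral (s : ℝ) : σ s = ((σ s).re : ℍ[ℝ]) := by
    refine eq_coe_re_of_forall_mul_comm fun x => ?_
    obtain ⟨y, rfl⟩ := σ.surjective x
    rw [← map_mul, ← map_mul, coe_commutes]
  let τ : ℝ →+* ℝ :=
    { toFun := fun s => (σ s).re
      map_one' := by simp
      map_zero' := by simp
      map_add' := fun a b => by simp
      map_mul' := fun a b => by
        rw [coe_mul, map_mul, hcentral a, hcentral b, ← coe_mul]
        simp only [re_coe] }
  have hτ : (σ r).re = r := DFunLike.congr_fun (Subsingleton.elim τ (RingHom.id ℝ)) r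
  rw [hcentral r, hτ]

theorem roth_quaternion_twisted_general {m n : ℕ} (σ : ℍ[ℝ] ≃+* ℍ[ℝ])
    (A : Matrix (Fin m) (Fin m) ℍ[ℝ]) (B : Matrix (Fin n) (Fin n) ℍ[ℝ])
    (C : Matrix (Fin m) (Fin n) ℍ[ℝ]) :
    (∃ X : Matrix (Fin m) (Fin n) ℍ[ℝ], A * X - X.map σ * B = C) ↔
    (∃ S : Matrix (Fin m ⊕ Fin n) (Fin m ⊕ Fin n) ℍ[ℝ], IsUnit S ∧
      fromBlocks A C 0 B * S = S.map σ * fromBlocks A 0 0 B) :=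
  exists_mul_sub_map_mul_eq_iff (AlgEquiv.ofRingEquiv (ringEquiv_apply_coe σ)).toAlgHom A B C

theorem roth_quaternion_twisted {m n : ℕ} (σ : ℍ[ℝ] ≃+* ℍ[ℝ])
    (hinv : ∀ h : ℍ[ℝ], σ (σ h) = h)
    (A : Matrix (Fin m) (Fin m) ℍ[ℝ]) (B : Matrix (Fin n) (Fin n) ℍ[ℝ])
    (C : Matrix (Fin m) (Fin n) ℍ[ℝ]) :
    (∃ X : Matrix (Fin m) (Fin n) ℍ[ℝ], A * X - X.map σ * B = C) ↔
    (∃ S : Matrix (Fin m ⊕ Fin n) (Fin m ⊕ Fin n) ℍ[ℝ], IsUnit S ∧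
      fromBlocks A C 0 B * S = S.map σ * fromBlocks A 0 0 B) :=
  roth_quaternion_twisted_general σ A B C
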